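/- Let 𝒜 ⊆ ℝ^2 be a pseudo-arc, i.e., a compact connected set with at least two points such that no compact connected subset of 𝒜 can be written as a union of two nonempty proper subsets that are both compact and connected. Then every Lipschitz map φ : I → 𝒜 from a real interval I into 𝒜 is constant. -/

import Mathlib

open Set

/-- Every Lipschitz map from a real interval into a pseudo-arc is constant. -/
theorem stmt8 (𝒜 : Set (EuclideanSpace ℝ (Fin 2)))
    (h𝒜cpt : IsCompact 𝒜) (h𝒜conn : IsConnected 𝒜)
    (h𝒜two : ∃ x ∈ 𝒜, ∃ y ∈ 𝒜, x ≠ y)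
    (h𝒜pseudo : ∀ K ⊆ 𝒜, IsCompact K → IsConnected K →
      ∀ K₁ K₂ : Set (EuclideanSpace ℝ (Fin 2)),
        K = K₁ ∪ K₂ → K₁.Nonempty → K₂.Nonempty →
        IsCompact K₁ → IsCompact K₂ → IsConnected K₁ → IsConnected K₂ →
        K₁ ⊂ K → K₂ ⊂ K → False)
    (I : Set ℝ) (hI : I.OrdConnected) (φ : ℝ → EuclideanSpace ℝ (Fin 2))
    (hφ𝒜 : ∀ t ∈ I, φ t ∈ 𝒜)
    (L : ℝ) (hL : 0 ≤ L)
    (hφlip : ∀ s ∈ I, ∀ t ∈ I, ‖φ s - φ t‖ ≤ L * |s - t|) :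
    ∀ s ∈ I, ∀ t ∈ I, φ s = φ t := by
  have hlip : LipschitzOnWith (Real.toNNReal L) φ I := by
    apply LipschitzOnWith.of_dist_le_mul
    intro x hx y hy
    rw [Real.coe_toNNReal L hL, dist_eq_norm, Real.dist_eq]
    exact hφlip x hx y hy
  have hcontI : ContinuousOn φ I := hlip.continuousOn
  have key : ∀ s ∈ I, ∀ t ∈ I, s ≤ t → φ s = φ t := by
    intro s hs t ht hst
    by_contra hab
    have hJI : Icc s t ⊆ I := hI.out hs ht
    have hcont : ContinuousOn φ (Icc s t) := hcontI.mono hJI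
    -- b-set
    set Sb : Set ℝ := {x ∈ Icc s t | φ x = φ t} with hSb
    have hSbne : Sb.Nonempty := ⟨t, ⟨⟨hst, le_refl t⟩, rfl⟩⟩
    have hSbclosed : IsClosed Sb := by
      have : Sb = Icc s t ∩ φ ⁻¹' {φ t} := by ext x; simp [hSb, and_comm]
      rw [this]
      exact hcont.preimage_isClosed_of_isClosed isClosed_Icc isClosed_singleton
    have hSbbdd : BddBelow Sb := ⟨s, fun x hx => hx.1.1⟩
    set m : ℝ := sInf Sb with hm
    have hmSb : m ∈ Sb := hSbclosed.csInf_mem hSbne hSbbdd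
    have hsm : s ≤ m := hmSb.1.1
    have hmt : m ≤ t := hmSb.1.2
    have hφm : φ m = φ t := hmSb.2
    have hnotb : ∀ x ∈ Ico s m, φ x ≠ φ t := by
      intro x hx hxb
      exact absurd (csInf_le hSbbdd ⟨⟨hx.1, le_trans hx.2.le hmt⟩, hxb⟩) (not_le.mpr hx.2)
    -- a-set
    set Sa : Set ℝ := {x ∈ Icc s m | φ x = φ s} with hSa
    have hSane : Sa.Nonempty := ⟨s, ⟨⟨le_refl s, hsm⟩, rfl⟩⟩
    have hSaclosed : IsClosed Sa := by
      have : Sa = Icc s m ∩ φ ⁻¹' {φ s} := by ext x; simp [hSa, and_comm]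
      rw [this]
      exact (hcont.mono (Icc_subset_Icc_right hmt)).preimage_isClosed_of_isClosed
        isClosed_Icc isClosed_singleton
    have hSabdd : BddAbove Sa := ⟨m, fun x hx => hx.1.2⟩
    set u : ℝ := sSup Sa with hu
    have huSa : u ∈ Sa := hSaclosed.csSup_mem hSane hSabdd
    have hsu : s ≤ u := huSa.1.1
    have hum : u ≤ m := huSa.1.2
    have hφu : φ u = φ s := huSa.2
    have hnota : ∀ x ∈ Ioc u m, φ x ≠ φ s := by
      intro x hx hxa
      exact absurd (le_csSup hSabdd ⟨⟨le_trans hsu hx.1.le, hx.2⟩, hxa⟩) (not_le.mpr hx.1)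
    have hum' : u < m := by
      rcases lt_or_eq_of_le hum with h | h
      · exact h
      · exact absurd (by rw [← hφu, h, hφm]) hab
    set c : ℝ := (u + m) / 2 with hc
    have huc : u < c := by rw [hc]; linarith
    have hcm : c < m := by rw [hc]; linarith
    have humI : Icc u m ⊆ I := fun x hx => hJI ⟨le_trans hsu hx.1, le_trans hx.2 hmt⟩
    have hcontum : ContinuousOn φ (Icc u m) :=
      hcont.mono (fun x hx => ⟨le_trans hsu hx.1, le_trans hx.2 hmt⟩)
    set K := φ '' Icc u m with hK
    set K₁ := φ '' Icc u c with hK₁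
    set K₂ := φ '' Icc c m with hK₂
    have hK₁K : K₁ ⊆ K := image_mono (f := φ) (Icc_subset_Icc_right hcm.le)
    have hK₂K : K₂ ⊆ K := image_mono (f := φ) (Icc_subset_Icc_left huc.le)
    have hbK₁ : φ t ∉ K₁ := by
      rintro ⟨x, hx, hxb⟩
      exact hnotb x ⟨le_trans hsu hx.1, lt_of_le_of_lt hx.2 hcm⟩ hxb
    have haK₂ : φ s ∉ K₂ := by
      rintro ⟨x, hx, hxa⟩
      exact hnota x ⟨lt_of_lt_of_le huc hx.1, hx.2⟩ hxa
    have hbK : φ t ∈ K := ⟨m, ⟨hum, le_refl m⟩, hφm⟩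
    have haK : φ s ∈ K := ⟨u, ⟨le_refl u, hum⟩, hφu⟩
    refine h𝒜pseudo K (fun x hx => ?_) ?_ ?_ K₁ K₂ ?_ ?_ ?_ ?_ ?_ ?_ ?_ ?_ ?_
    · rcases hx with ⟨y, hy, rfl⟩; exact hφ𝒜 y (humI hy)
    · exact isCompact_Icc.image_of_continuousOn hcontum
    · exact ⟨⟨φ u, ⟨u, ⟨le_refl u, hum⟩, rfl⟩⟩,
        isPreconnected_Icc.image φ hcontum⟩
    · rw [hK, hK₁, hK₂, ← image_union, Icc_union_Icc_eq_Icc huc.le hcm.le]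
    · exact ⟨φ u, u, ⟨le_refl u, huc.le⟩, rfl⟩
    · exact ⟨φ c, c, ⟨le_refl c, hcm.le⟩, rfl⟩
    · exact isCompact_Icc.image_of_continuousOn
        (hcontum.mono (Icc_subset_Icc_right hcm.le))
    · exact isCompact_Icc.image_of_continuousOn
        (hcontum.mono (Icc_subset_Icc_left huc.le))
    · exact ⟨⟨φ u, u, ⟨le_refl u, huc.le⟩, rfl⟩,
        isPreconnected_Icc.image φ (hcontum.mono (Icc_subset_Icc_right hcm.le))⟩
    · exact ⟨⟨φ c, c, ⟨le_refl c, hcm.le⟩, rfl⟩,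
        isPreconnected_Icc.image φ (hcontum.mono (Icc_subset_Icc_left huc.le))⟩
    · exact ⟨hK₁K, fun h => hbK₁ (h hbK)⟩
    · exact ⟨hK₂K, fun h => haK₂ (h haK)⟩
  intro s hs t ht
  rcases le_total s t with h | h
  · exact key s hs t ht h
  · exact (key t ht s hs h).symm
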